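/- arXiv:2006.14278 — 2 statements merged into one kernel-verified Lean document; each statement's English description precedes it below -/
import Mathlib

section
/- Under the separability assumption, each non-anchor row of Σ = UΛUᵀ is a nonnegative linear combination of the anchor rows of Σ, with combination coefficients U_{ik}/U_{π(k),k}. -/
/-!
Write `S = U * W` with `W = Λ * Uᵀ`. Every row of `S` is the combination `S i = ∑ k, U i k • W k`
of the rows of `W`, and since the anchor row `π k` of `U` is supported on column `k`, the anchor
row of `S` is a single rescaled row, `S (π k) = U (π k) k • W k`. Solving for `W k` and
substituting gives the cone combination, with nonnegative coefficients because `U ≥ 0`.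
-/

open Matrix

namespace Matrix

variable {m n o α : Type*} [Fintype n]

theorem mul_row_eq_sum [NonUnitalNonAssocSemiring α] (A : Matrix m n α) (B : Matrix n o α)
    (i : m) : (A * B) i = ∑ k, A i k • B k := by
  rw [mul_apply_eq_vecMul, vecMul_eq_sum]

theorem mul_row_eq_smul_of_row_supported [NonUnitalNonAssocSemiring α] (A : Matrix m n α)
    (B : Matrix n o α) {a : m} {k : n} (hA : ∀ j, j ≠ k → A a j = 0) :
    (A * B) a = A a k • B k := by
  rw [mul_row_eq_sum, Fintype.sum_eq_single k fun j hj => by rw [hA j hj, zero_smul]]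

theorem mul_row_eq_sum_div_smul_anchor_rows [Field α] (A : Matrix m n α) (B : Matrix n o α)
    (π : n → m) (hzero : ∀ k j, j ≠ k → A (π k) j = 0) (hne : ∀ k, A (π k) k ≠ 0) (i : m) :
    (A * B) i = ∑ k, (A i k / A (π k) k) • (A * B) (π k) := by
  rw [mul_row_eq_sum]
  refine Finset.sum_congr rfl fun k _ => ?_
  rw [mul_row_eq_smul_of_row_supported A B (hzero k), smul_smul, div_mul_cancel₀ _ (hne k)]

end Matrix

theorem nonanchor_rows_cone_combination_general
    (n r : ℕ) (U : Matrix (Fin n) (Fin r) ℝ) (Λ : Matrix (Fin r) (Fin r) ℝ)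
    (p : ℝ) (hp : 0 < p)
    (hU_nonneg : ∀ i k, 0 ≤ U i k)
    (π : Fin r → Fin n)
    (hzero : ∀ k : Fin r, ∀ j : Fin r, j ≠ k → U (π k) j = 0)
    (hval : ∀ k : Fin r, p ≤ U (π k) k)
    (S : Matrix (Fin n) (Fin n) ℝ) (hS : S = U * Λ * Uᵀ) :
    ∀ i : Fin n,
      (∀ k : Fin r, 0 ≤ U i k / U (π k) k) ∧
      S i = ∑ k : Fin r, (U i k / U (π k) k) • S (π k) := by
  have hpos : ∀ k, 0 < U (π k) k := fun k => hp.trans_le (hval k)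
  intro i
  refine ⟨fun k => div_nonneg (hU_nonneg i k) (hpos k).le, ?_⟩
  rw [hS, Matrix.mul_assoc]
  exact mul_row_eq_sum_div_smul_anchor_rows U _ π hzero (fun k => (hpos k).ne') i

theorem nonanchor_rows_cone_combination
    (n r : ℕ) (U : Matrix (Fin n) (Fin r) ℝ) (Λ : Matrix (Fin r) (Fin r) ℝ)
    (p : ℝ) (hp : 0 < p)
    (hU_nonneg : ∀ i k, 0 ≤ U i k)
    (π : Fin r → Fin n)
    (hzero : ∀ k : Fin r, ∀ j : Fin r, j ≠ k → U (π k) j = 0)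
    (hval : ∀ k : Fin r, p ≤ U (π k) k)
    (hΛ_symm : Λ.IsSymm) (hΛ_pd : Λ.PosDef) (hΛ_nonneg : ∀ i j, 0 ≤ Λ i j)
    (S : Matrix (Fin n) (Fin n) ℝ) (hS : S = U * Λ * Uᵀ) :
    ∀ i : Fin n,
      (∀ k : Fin r, 0 ≤ U i k / U (π k) k) ∧
      S i = ∑ k : Fin r, (U i k / U (π k) k) • S (π k) :=
  nonanchor_rows_cone_combination_general n r U Λ p hp hU_nonneg π hzero hval S hS
end

section
/- If two nodes u and v have isomorphic r-balls (B(u,r) ≅ B(v,r) via an isomorphism sending u to v), then the distributions of anonymous walks of any length L ≤ r starting from u and from v are identical. -/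
/-- The first position at which the vertex `w i` occurs in the walk `w`. -/
def firstOcc {n : ℕ} {α : Type*} [DecidableEq α] (w : Fin n → α) (i : Fin n) : Fin n :=
  (Finset.univ.filter fun j => w j = w i).min' ⟨i, by simp⟩

/-- The anonymization of a walk. -/
def anon {n : ℕ} {α : Type*} [DecidableEq α] (w : Fin n → α) (i : Fin n) : ℕ :=
  ((Finset.univ.filter fun j => j < firstOcc w i).image w).card

/-- The probability that the uniform random walk of length `L` started at `v`
has anonymous walk `a`. -/
noncomputable def awProb {V : Type*} [Fintype V] [DecidableEq V]
    (G : SimpleGraph V) [DecidableRel G.Adj] (v : V) (L : ℕ)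
    (a : Fin (L + 1) → ℕ) : ℝ :=
  ∑ w : Fin (L + 1) → V,
    if w 0 = v ∧ (∀ i : Fin L, G.Adj (w i.castSucc) (w i.succ)) ∧ anon w = a then
      ∏ i : Fin L, ((G.degree (w i.castSucc) : ℝ))⁻¹
    else 0

/-!
A walk of length `L ≤ r` from `u` stays in the ball `B(u, r)`, and each vertex it leaves from
(index `< L`) has its whole neighbourhood in that ball, so its degree is seen by the ball.
Extending the isomorphism of balls to a permutation of `V` therefore maps the walks from `u`
bijectively onto the walks from `v`, preserving anonymizations and every degree that enters the
probability of the walk.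
-/

open SimpleGraph Finset

section

variable {V W : Type*}

lemma anon_comp {n : ℕ} [DecidableEq V] [DecidableEq W] {f : V → W} (hf : f.Injective)
    (w : Fin n → V) : anon (f ∘ w) = anon w := by
  have hocc : firstOcc (f ∘ w) = firstOcc w := by
    funext i
    simp only [firstOcc, Function.comp_apply, hf.eq_iff]
  funext i
  simp only [anon, hocc, ← image_image, card_image_of_injective _ hf]

lemma Equiv.extendSubtype_symm_apply_of_mem [Fintype V] {p q : V → Prop}
    [DecidablePred p] [DecidablePred q] (e : {x // p x} ≃ {x // q x}) (y : V) (hy : q y) :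
    e.extendSubtype.symm y = e.symm ⟨y, hy⟩ := by
  rw [Equiv.symm_apply_eq, e.extendSubtype_apply_of_mem _ (e.symm ⟨y, hy⟩).2]
  simp

namespace SimpleGraph

variable {G : SimpleGraph V} {H : SimpleGraph W}

lemma dist_le_dist_add_one_of_adj (u : V) {x y : V} (h : G.Adj x y) :
    G.dist u y ≤ G.dist u x + 1 := by
  simpa [dist_eq_one_iff_adj.mpr h] using h.reachable.dist_triangle_right u

lemma Iso.degree_eq_of_induce [Fintype V] [DecidableRel G.Adj] [Fintype W] [DecidableRel H.Adj]
    {S : Set V} {T : Set W} (ψ : G.induce S ≃g H.induce T) (x : S)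
    (hS : G.neighborSet x ⊆ S) (hT : H.neighborSet (ψ x) ⊆ T) :
    H.degree (ψ x) = G.degree x := by
  classical
  rw [← degree_induce_of_neighborSet_subset hS, ← degree_induce_of_neighborSet_subset hT,
    ψ.degree_eq]

def IsWalkSeq (G : SimpleGraph V) (u : V) {L : ℕ} (w : Fin (L + 1) → V) : Prop :=
  w 0 = u ∧ ∀ i : Fin L, G.Adj (w i.castSucc) (w i.succ)

instance [DecidableEq V] [DecidableRel G.Adj] {u : V} {L : ℕ} (w : Fin (L + 1) → V) :
    Decidable (G.IsWalkSeq u w) :=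
  inferInstanceAs (Decidable (_ ∧ _))

namespace IsWalkSeq

variable {u : V} {r L : ℕ} {w : Fin (L + 1) → V}

lemma dist_le (hw : G.IsWalkSeq u w) (k : Fin (L + 1)) : G.dist u (w k) ≤ k := by
  induction k using Fin.induction with
  | zero => simp [hw.1]
  | succ i ih =>
    have := G.dist_le_dist_add_one_of_adj u (hw.2 i)
    simp only [Fin.val_succ, Fin.val_castSucc] at ih ⊢
    omega

lemma neighborSet_subset (hw : G.IsWalkSeq u w) (hL : L ≤ r) (i : Fin L) :
    G.neighborSet (w i.castSucc) ⊆ {y | G.dist u y ≤ r} := fun y hy => by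
  have hy_dist := G.dist_le_dist_add_one_of_adj u hy
  have hi_dist := hw.dist_le i.castSucc
  simp only [Fin.val_castSucc] at hi_dist
  simp only [Set.mem_ofPred_eq]
  omega

theorem comp_of_ball_iso [Fintype V] [DecidableRel G.Adj] [Fintype W] [DecidableRel H.Adj]
    {v : W} (ψ : G.induce {x | G.dist u x ≤ r} ≃g H.induce {y | H.dist v y ≤ r})
    {f : V → W} (hf : ∀ x (hx : G.dist u x ≤ r), f x = ψ ⟨x, hx⟩) (hfu : f u = v)
    (hL : L ≤ r) (hw : G.IsWalkSeq u w) :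
    H.IsWalkSeq v (f ∘ w) ∧
      ∀ i : Fin L, H.degree (f (w i.castSucc)) = G.degree (w i.castSucc) := by
  have hball (k : Fin (L + 1)) : G.dist u (w k) ≤ r := (hw.dist_le k).trans (k.is_le.trans hL)
  have hfw : H.IsWalkSeq v (f ∘ w) := by
    refine ⟨by rw [Function.comp_apply, hw.1, hfu], fun i => ?_⟩
    simp only [Function.comp_apply, hf _ (hball _)]
    exact ψ.map_adj_iff.mpr (hw.2 i)
  refine ⟨hfw, fun i => ?_⟩
  have hT : H.neighborSet (f (w i.castSucc)) ⊆ _ := hfw.neighborSet_subset hL i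
  rw [hf _ (hball _)] at hT ⊢
  exact ψ.degree_eq_of_induce ⟨_, hball _⟩ (hw.neighborSet_subset hL i) hT

end IsWalkSeq

end SimpleGraph

lemma awProb_eq_sum_isWalkSeq [Fintype V] [DecidableEq V] (G : SimpleGraph V)
    [DecidableRel G.Adj] (v : V) (L : ℕ) (a : Fin (L + 1) → ℕ) :
    awProb G v L a = ∑ w : Fin (L + 1) → V,
      if G.IsWalkSeq v w ∧ anon w = a then ∏ i : Fin L, ((G.degree (w i.castSucc) : ℝ))⁻¹
      else 0 := by
  simp only [awProb, IsWalkSeq, and_assoc]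

theorem awProb_eq_of_equiv [Fintype V] [DecidableEq V] [Fintype W] [DecidableEq W]
    {G : SimpleGraph V} {H : SimpleGraph W} [DecidableRel G.Adj] [DecidableRel H.Adj]
    {u : V} {v : W} {L : ℕ} (e : V ≃ W)
    (he : ∀ w : Fin (L + 1) → V, G.IsWalkSeq u w →
      H.IsWalkSeq v (e ∘ w) ∧
        ∀ i : Fin L, H.degree (e (w i.castSucc)) = G.degree (w i.castSucc))
    (he_symm : ∀ w : Fin (L + 1) → W, H.IsWalkSeq v w → G.IsWalkSeq u (e.symm ∘ w))
    (a : Fin (L + 1) → ℕ) :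
    awProb G u L a = awProb H v L a := by
  rw [awProb_eq_sum_isWalkSeq, awProb_eq_sum_isWalkSeq]
  refine Fintype.sum_equiv ((Equiv.refl _).arrowCongr e) _ _ fun w => ?_
  have hwalk : G.IsWalkSeq u w ↔ H.IsWalkSeq v (e ∘ w) :=
    ⟨fun h => (he w h).1, fun h => by simpa [Function.comp_def] using he_symm _ h⟩
  rw [show (Equiv.refl _).arrowCongr e w = e ∘ w from rfl, anon_comp e.injective]
  simp only [← hwalk]
  split_ifs with h
  · exact prod_congr rfl fun i _ => by rw [Function.comp_apply, (he w h.1).2 i]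
  · rfl

end

theorem isomorphic_balls_same_anonymous_walk_distribution
    {V : Type*} [Fintype V] [DecidableEq V]
    (G : SimpleGraph V) [DecidableRel G.Adj]
    (u v : V) (r : ℕ)
    (hu : u ∈ {w | G.dist u w ≤ r}) (hv : v ∈ {w | G.dist v w ≤ r})
    (φ : (SimpleGraph.induce {w | G.dist u w ≤ r} G) ≃g
         (SimpleGraph.induce {w | G.dist v w ≤ r} G))
    (hφ : φ ⟨u, hu⟩ = ⟨v, hv⟩) :
    ∀ L : ℕ, L ≤ r → ∀ a : Fin (L + 1) → ℕ, awProb G u L a = awProb G v L a := by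
  intro L hL a
  classical
  let e := φ.toEquiv.extendSubtype
  have he (x : V) (hx : G.dist u x ≤ r) : e x = φ ⟨x, hx⟩ :=
    φ.toEquiv.extendSubtype_apply_of_mem x hx
  have heu : e u = v := by rw [he u hu, hφ]
  have hev : e.symm v = u := by rw [← heu, e.symm_apply_apply]
  exact awProb_eq_of_equiv e (fun w hw => hw.comp_of_ball_iso φ he heu hL)
    (fun w hw => (hw.comp_of_ball_iso φ.symm φ.toEquiv.extendSubtype_symm_apply_of_mem hev hL).1)
    a
end
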